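/- arXiv:2007.09296 — 2 statements merged into one kernel-verified Lean document; each statement's English description precedes it below -/
import Mathlib

section
/- Let G be a finite connected graph, Ã = A + I, D̃ its degree matrix, and Â⊙ = D̃^{-1/2} Ã D̃^{-1/2}. Then lim_{k→∞} Â⊙^k = u u^T, where u = D̃^{1/2} e^T / ‖D̃^{1/2} e^T‖ is the unit vector whose i-th entry is √D̃_{ii} / √(Σ_l D̃_{ll}); i.e., the limit has (i,j)-entry √(D̃_{ii} D̃_{jj}) / Σ_l D̃_{ll}. -/
open Matrix Filter Finset

set_option linter.unusedSectionVars false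

section aux
variable {ι : Type*} [Fintype ι] [DecidableEq ι] [Nonempty ι]

noncomputable def maxv (x : ι → ℝ) : ℝ := Finset.univ.sup' Finset.univ_nonempty x
noncomputable def minv (x : ι → ℝ) : ℝ := Finset.univ.inf' Finset.univ_nonempty x

lemma le_maxv (x : ι → ℝ) (i : ι) : x i ≤ maxv x := Finset.le_sup' x (Finset.mem_univ i)
lemma minv_le (x : ι → ℝ) (i : ι) : minv x ≤ x i := Finset.inf'_le x (Finset.mem_univ i)
lemma minv_le_maxv (x : ι → ℝ) : minv x ≤ maxv x :=
  le_trans (minv_le x (Classical.arbitrary ι)) (le_maxv x _)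

lemma mulVec_le_bound (M : Matrix ι ι ℝ) (x : ι → ℝ) (ε : ℝ)
    (hM : ∀ i j, ε ≤ M i j) (hrow : ∀ i, ∑ j, M i j = 1) (i : ι) :
    M.mulVec x i ≤ ε * (∑ k, x k) + (1 - (Fintype.card ι) * ε) * maxv x := by
  have h1 : M.mulVec x i = ∑ k, (ε * x k) + ∑ k, (M i k - ε) * x k := by
    simp only [Matrix.mulVec, dotProduct, ← Finset.sum_add_distrib]
    congr 1; funext k; ring
  rw [h1, ← Finset.mul_sum]
  gcongr
  calc ∑ k, (M i k - ε) * x k ≤ ∑ k, (M i k - ε) * maxv x := by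
        apply Finset.sum_le_sum
        intro k _
        exact mul_le_mul_of_nonneg_left (le_maxv x k) (by linarith [hM i k])
    _ = (1 - (Fintype.card ι) * ε) * maxv x := by
        rw [← Finset.sum_mul, Finset.sum_sub_distrib, hrow i, Finset.sum_const,
          Finset.card_univ, nsmul_eq_mul]

lemma mulVec_ge_bound (M : Matrix ι ι ℝ) (x : ι → ℝ) (ε : ℝ)
    (hM : ∀ i j, ε ≤ M i j) (hrow : ∀ i, ∑ j, M i j = 1) (i : ι) :
    ε * (∑ k, x k) + (1 - (Fintype.card ι) * ε) * minv x ≤ M.mulVec x i := by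
  have h1 : M.mulVec x i = ∑ k, (ε * x k) + ∑ k, (M i k - ε) * x k := by
    simp only [Matrix.mulVec, dotProduct, ← Finset.sum_add_distrib]
    congr 1; funext k; ring
  rw [h1, ← Finset.mul_sum]
  gcongr
  calc ((1:ℝ) - (Fintype.card ι) * ε) * minv x = ∑ k, (M i k - ε) * minv x := by
        rw [← Finset.sum_mul, Finset.sum_sub_distrib, hrow i, Finset.sum_const,
          Finset.card_univ, nsmul_eq_mul]
    _ ≤ ∑ k, (M i k - ε) * x k := by
        apply Finset.sum_le_sum
        intro k _
        exact mul_le_mul_of_nonneg_left (minv_le x k) (by linarith [hM i k])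

lemma osc_mulVec (M : Matrix ι ι ℝ) (x : ι → ℝ) (ε : ℝ)
    (hM : ∀ i j, ε ≤ M i j) (hrow : ∀ i, ∑ j, M i j = 1) :
    maxv (M.mulVec x) - minv (M.mulVec x)
      ≤ (1 - (Fintype.card ι) * ε) * (maxv x - minv x) := by
  have h1 : maxv (M.mulVec x) ≤ ε * (∑ k, x k) + (1 - (Fintype.card ι) * ε) * maxv x :=
    Finset.sup'_le _ _ fun i _ => mulVec_le_bound M x ε hM hrow i
  have h2 : ε * (∑ k, x k) + (1 - (Fintype.card ι) * ε) * minv x ≤ minv (M.mulVec x) :=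
    Finset.le_inf' _ _ fun i _ => mulVec_ge_bound M x ε hM hrow i
  nlinarith [h1, h2]

lemma dot_le_maxv (π x : ι → ℝ) (hπ : ∀ i, 0 ≤ π i) (hsum : ∑ i, π i = 1) :
    π ⬝ᵥ x ≤ maxv x := by
  calc π ⬝ᵥ x = ∑ i, π i * x i := rfl
    _ ≤ ∑ i, π i * maxv x :=
        Finset.sum_le_sum fun i _ => mul_le_mul_of_nonneg_left (le_maxv x i) (hπ i)
    _ = maxv x := by rw [← Finset.sum_mul, hsum, one_mul]

lemma minv_le_dot (π x : ι → ℝ) (hπ : ∀ i, 0 ≤ π i) (hsum : ∑ i, π i = 1) :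
    minv x ≤ π ⬝ᵥ x := by
  calc minv x = ∑ i, π i * minv x := by rw [← Finset.sum_mul, hsum, one_mul]
    _ ≤ ∑ i, π i * x i :=
        Finset.sum_le_sum fun i _ => mul_le_mul_of_nonneg_left (minv_le x i) (hπ i)
    _ = π ⬝ᵥ x := rfl

lemma myconj_pow {R : Type*} [Ring R] (u a v : R) (huv : u * v = 1) (hvu : v * u = 1) (k : ℕ) :
    (u * a * v) ^ k = u * a ^ k * v := by
  induction k with
  | zero => simp [huv]
  | succ k ih =>
      rw [pow_succ, ih, pow_succ]
      have h : v * (u * (a * v)) = a * v := by rw [← mul_assoc, hvu, one_mul]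
      calc u * a ^ k * v * (u * a * v)
          = u * (a ^ k * (v * (u * (a * v)))) := by simp only [mul_assoc]
        _ = u * (a ^ k * (a * v)) := by rw [h]
        _ = u * (a ^ k * a) * v := by simp only [mul_assoc]

end aux

/-- For a connected graph, powers of D̃^{-1/2} Ã D̃^{-1/2} converge entrywise to
the rank-one matrix with (i,j)-entry √(d i * d j) / Σ_l d l. -/
theorem stmt10 {n : ℕ} (G : SimpleGraph (Fin n)) [DecidableRel G.Adj]
    (hconn : G.Connected)
    (Atil : Matrix (Fin n) (Fin n) ℝ) (hAtil : Atil = G.adjMatrix ℝ + 1)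
    (d : Fin n → ℝ) (hd : ∀ i, d i = ∑ j, Atil i j) :
    ∀ i j, Filter.Tendsto
      (fun k : ℕ => ((Matrix.diagonal (fun i => (Real.sqrt (d i))⁻¹) * Atil *
        Matrix.diagonal (fun i => (Real.sqrt (d i))⁻¹)) ^ k) i j)
      Filter.atTop (nhds (Real.sqrt (d i * d j) / ∑ l, d l)) := by
  haveI : Nonempty (Fin n) := hconn.nonempty
  have hn : 0 < n := Fin.pos_iff_nonempty.mpr ‹_›
  -- basic facts about Atil and d
  have hA_nonneg : ∀ i j, 0 ≤ Atil i j := by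
    intro i j
    simp only [hAtil, Matrix.add_apply, SimpleGraph.adjMatrix_apply, Matrix.one_apply]
    positivity
  have hA_symm : ∀ i j, Atil i j = Atil j i := by
    intro i j
    simp only [hAtil, Matrix.add_apply, SimpleGraph.adjMatrix_apply, Matrix.one_apply]
    rw [if_congr (G.adj_comm i j) rfl rfl, if_congr (eq_comm (a := i) (b := j)) rfl rfl]
  have hA_diag : ∀ i, Atil i i = 1 := by
    intro i
    simp [hAtil, Matrix.add_apply, Matrix.one_apply]
  have hA_adj : ∀ i j, G.Adj i j → (1:ℝ) ≤ Atil i j := by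
    intro i j h
    simp [hAtil, Matrix.add_apply, Matrix.one_apply, h]
    positivity
  have hd_pos : ∀ i, 0 < d i := by
    intro i
    have h1 : (1:ℝ) ≤ ∑ j, Atil i j := by
      calc (1:ℝ) = Atil i i := (hA_diag i).symm
        _ ≤ ∑ j, Atil i j :=
          Finset.single_le_sum (fun j _ => hA_nonneg i j) (Finset.mem_univ i)
    rw [hd i]; linarith
  have hd_ne : ∀ i, d i ≠ 0 := fun i => (hd_pos i).ne'
  set S : ℝ := ∑ l, d l with hS
  have hS_pos : 0 < S := Finset.sum_pos (fun i _ => hd_pos i) Finset.univ_nonempty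
  -- the random-walk matrix
  set P : Matrix (Fin n) (Fin n) ℝ := Matrix.diagonal (fun i => (d i)⁻¹) * Atil with hP
  have hP_apply : ∀ i j, P i j = (d i)⁻¹ * Atil i j := by
    intro i j; rw [hP, Matrix.diagonal_mul]
  have hP_nonneg : ∀ i j, 0 ≤ P i j := by
    intro i j; rw [hP_apply]
    exact mul_nonneg (inv_nonneg.mpr (hd_pos i).le) (hA_nonneg i j)
  have hP_row : ∀ i, ∑ j, P i j = 1 := by
    intro i
    simp only [hP_apply, ← Finset.mul_sum, ← hd i]
    exact inv_mul_cancel₀ (hd_ne i)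
  -- powers of P: nonneg entries, row sums 1
  have hPk_nonneg : ∀ k i j, 0 ≤ (P ^ k) i j := by
    intro k
    induction k with
    | zero => intro i j; simp [Matrix.one_apply]; positivity
    | succ k ih =>
        intro i j
        rw [pow_succ, Matrix.mul_apply]
        exact Finset.sum_nonneg fun l _ => mul_nonneg (ih i l) (hP_nonneg l j)
  have hPk_row : ∀ k i, ∑ j, (P ^ k) i j = 1 := by
    intro k
    induction k with
    | zero => intro i; simp [Matrix.one_apply]
    | succ k ih =>
        intro i
        simp only [pow_succ, Matrix.mul_apply]
        rw [Finset.sum_comm]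
        simp only [← Finset.mul_sum, hP_row]
        simpa using ih i
  -- positivity of entries of P^m for walks
  have hwalk : ∀ (a b : Fin n) (p : G.Walk a b), 0 < (P ^ p.length) a b := by
    intro a b p
    induction p with
    | nil => simp [Matrix.one_apply]
    | @cons u v w h p ih =>
        rw [SimpleGraph.Walk.length_cons, pow_succ', Matrix.mul_apply]
        apply Finset.sum_pos'
        · exact fun l _ => mul_nonneg (hP_nonneg u l) (hPk_nonneg _ l w)
        · refine ⟨v, Finset.mem_univ v, mul_pos ?_ ih⟩
          rw [hP_apply]
          exact mul_pos (inv_pos.mpr (hd_pos u)) (lt_of_lt_of_le one_pos (hA_adj u v h))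
  have hmono : ∀ (m : ℕ) (a b : Fin n), 0 < (P ^ m) a b → 0 < (P ^ (m+1)) a b := by
    intro m a b hpos
    rw [pow_succ, Matrix.mul_apply]
    apply Finset.sum_pos'
    · exact fun l _ => mul_nonneg (hPk_nonneg m a l) (hP_nonneg l b)
    · refine ⟨b, Finset.mem_univ b, mul_pos hpos ?_⟩
      rw [hP_apply, hA_diag, mul_one]
      exact inv_pos.mpr (hd_pos b)
  have hPn_pos : ∀ a b, 0 < (P ^ n) a b := by
    intro a b
    obtain ⟨p⟩ := hconn a b
    have hlen : p.toPath.1.length < n := by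
      simpa [Fintype.card_fin] using p.toPath.2.length_lt
    have key : ∀ m, p.toPath.1.length ≤ m → 0 < (P ^ m) a b := by
      intro m hm
      induction m with
      | zero =>
          have : p.toPath.1.length = 0 := Nat.le_zero.mp hm
          simpa [this] using hwalk a b p.toPath.1
      | succ m ih =>
          rcases Nat.lt_or_ge p.toPath.1.length (m+1) with h | h
          · exact hmono m a b (ih (Nat.lt_succ_iff.mp h))
          · have : p.toPath.1.length = m + 1 := le_antisymm hm h
            simpa [this] using hwalk a b p.toPath.1
    exact key n hlen.le
  -- the Doeblin constant
  set ε : ℝ := Finset.univ.inf' Finset.univ_nonempty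
      (fun q : Fin n × Fin n => (P ^ n) q.1 q.2) with hε
  have hε_pos : 0 < ε := by
    rw [hε, Finset.lt_inf'_iff]
    exact fun q _ => hPn_pos q.1 q.2
  have hε_le : ∀ a b, ε ≤ (P ^ n) a b := by
    intro a b
    exact Finset.inf'_le _ (Finset.mem_univ (a, b))
  set c : ℝ := 1 - n * ε with hc
  have hcard : (Fintype.card (Fin n) : ℝ) = (n : ℝ) := by simp
  have hc0 : 0 ≤ c := by
    have a := Classical.arbitrary (Fin n)
    have h1 : (n : ℝ) * ε ≤ ∑ b, (P ^ n) a b := by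
      calc (n : ℝ) * ε = ∑ _b : Fin n, ε := by simp [Finset.sum_const, mul_comm]
        _ ≤ ∑ b, (P ^ n) a b := Finset.sum_le_sum fun b _ => hε_le a b
    rw [hPk_row n a] at h1
    rw [hc]; linarith
  have hc1 : c < 1 := by
    rw [hc]
    have : (0:ℝ) < (n:ℝ) * ε := mul_pos (by exact_mod_cast hn) hε_pos
    linarith
  -- fix i j and study the j-th column of P^k
  intro i j
  set y : ℕ → Fin n → ℝ := fun k a => (P ^ k) a j with hy
  have hyrec : ∀ k, y (k+1) = P.mulVec (y k) := by
    intro k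
    funext a
    rw [hy]
    simp only [pow_succ', Matrix.mul_apply, Matrix.mulVec, dotProduct]
  have hyrecM : ∀ k, y (n + k) = (P ^ n).mulVec (y k) := by
    intro k
    funext a
    rw [hy]
    simp only [pow_add, Matrix.mul_apply, Matrix.mulVec, dotProduct]
  -- the stationary distribution
  set π : Fin n → ℝ := fun l => d l / S with hπ
  have hπ_nonneg : ∀ l, 0 ≤ π l := fun l => div_nonneg (hd_pos l).le hS_pos.le
  have hπ_sum : ∑ l, π l = 1 := by
    rw [hπ, ← Finset.sum_div]
    exact div_self hS_pos.ne'
  have hstat : π ᵥ* P = π := by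
    funext b
    simp only [Matrix.vecMul, dotProduct, hπ, hP_apply]
    have : ∀ a, d a / S * ((d a)⁻¹ * Atil a b) = Atil b a / S := by
      intro a
      rw [hA_symm a b, div_mul_eq_mul_div, ← mul_assoc, mul_inv_cancel₀ (hd_ne a), one_mul]
    simp only [this]
    rw [← Finset.sum_div, ← hd b]
  have hdot : ∀ k, π ⬝ᵥ y k = d j / S := by
    intro k
    induction k with
    | zero =>
        simp only [hy, pow_zero, dotProduct, Matrix.one_apply, mul_ite, mul_one,
          mul_zero]
        rw [Finset.sum_ite_eq' Finset.univ j π]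
        simp [hπ]
    | succ k ih =>
        rw [hyrec k, Matrix.dotProduct_mulVec, hstat, ih]
  -- oscillation decay
  set osc : ℕ → ℝ := fun k => maxv (y k) - minv (y k) with hosc
  have hosc_nonneg : ∀ k, 0 ≤ osc k := fun k => sub_nonneg.mpr (minv_le_maxv (y k))
  have hosc_mono : ∀ k, osc (k+1) ≤ osc k := by
    intro k
    have h := osc_mulVec P (y k) 0 (fun a b => hP_nonneg a b) hP_row
    rw [← hyrec k] at h
    simp only [mul_zero, sub_zero, one_mul] at h
    exact h
  have hosc_le0 : ∀ k, osc k ≤ osc 0 := by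
    intro k
    induction k with
    | zero => exact le_rfl
    | succ k ih => exact le_trans (hosc_mono k) ih
  have hosc_step : ∀ k, osc (n + k) ≤ c * osc k := by
    intro k
    have h := osc_mulVec (P ^ n) (y k) ε (fun a b => hε_le a b) (hPk_row n)
    rw [← hyrecM k, hcard] at h
    exact h
  have hosc_div : ∀ k, osc k ≤ c ^ (k / n) * osc 0 := by
    intro k
    induction k using Nat.strong_induction_on with
    | _ k ih =>
        rcases Nat.lt_or_ge k n with h | h
        · rw [Nat.div_eq_of_lt h, pow_zero, one_mul]
          exact hosc_le0 k
        · have hk : k = n + (k - n) := by omega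
          have h1 : osc k ≤ c * osc (k - n) := by
            have h1x := hosc_step (k - n)
            rwa [← hk] at h1x
          have h2 : osc (k - n) ≤ c ^ ((k - n) / n) * osc 0 := ih (k - n) (by omega)
          have h3 : k / n = (k - n) / n + 1 := Nat.div_eq_sub_div hn h
          calc osc k ≤ c * (c ^ ((k - n) / n) * osc 0) :=
                le_trans h1 (mul_le_mul_of_nonneg_left h2 hc0)
            _ = c ^ ((k - n) / n + 1) * osc 0 := by ring
            _ = c ^ (k / n) * osc 0 := by rw [h3]
  -- entrywise bound and convergence of y · i to d j / S
  have hbound : ∀ k, |y k i - d j / S| ≤ c ^ (k / n) * osc 0 := by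
    intro k
    have h1 : y k i ≤ maxv (y k) := le_maxv (y k) i
    have h2 : minv (y k) ≤ y k i := minv_le (y k) i
    have h3 : π ⬝ᵥ y k ≤ maxv (y k) := dot_le_maxv π (y k) hπ_nonneg hπ_sum
    have h4 : minv (y k) ≤ π ⬝ᵥ y k := minv_le_dot π (y k) hπ_nonneg hπ_sum
    rw [hdot k] at h3 h4
    have h5 := hosc_div k
    rw [abs_le]
    constructor <;> simp only [hosc] at h5 <;> linarith
  have hdiv_tendsto : Tendsto (fun k : ℕ => k / n) atTop atTop := by
    apply tendsto_atTop_atTop.mpr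
    intro b
    exact ⟨b * n, fun a ha => (Nat.le_div_iff_mul_le hn).mpr ha⟩
  have hgeo : Tendsto (fun k : ℕ => c ^ (k / n) * osc 0) atTop (nhds 0) := by
    have h0 : Tendsto (fun m : ℕ => c ^ m) atTop (nhds 0) :=
      tendsto_pow_atTop_nhds_zero_of_lt_one hc0 hc1
    have h1 : Tendsto (fun k : ℕ => c ^ (k / n)) atTop (nhds 0) := h0.comp hdiv_tendsto
    simpa using h1.mul_const (osc 0)
  have hytendsto : Tendsto (fun k => y k i) atTop (nhds (d j / S)) := by
    have h0 : Tendsto (fun k => y k i - d j / S) atTop (nhds 0) :=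
      squeeze_zero_norm hbound hgeo
    have := h0.add_const (d j / S)
    simpa using this
  -- back to the symmetric matrix
  set E : Matrix (Fin n) (Fin n) ℝ := Matrix.diagonal (fun i => Real.sqrt (d i)) with hE
  set F : Matrix (Fin n) (Fin n) ℝ := Matrix.diagonal (fun i => (Real.sqrt (d i))⁻¹) with hF
  have hsqrt_pos : ∀ l, 0 < Real.sqrt (d l) := fun l => Real.sqrt_pos.mpr (hd_pos l)
  have hEF : E * F = 1 := by
    rw [hE, hF, Matrix.diagonal_mul_diagonal]
    convert Matrix.diagonal_one using 2
    funext l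
    exact mul_inv_cancel₀ (hsqrt_pos l).ne'
  have hFE : F * E = 1 := by
    rw [hE, hF, Matrix.diagonal_mul_diagonal]
    convert Matrix.diagonal_one using 2
    funext l
    exact inv_mul_cancel₀ (hsqrt_pos l).ne'
  have hconj : F * Atil * F = E * P * F := by
    have h2 : E * Matrix.diagonal (fun i => (d i)⁻¹) = F := by
      rw [hE, hF, Matrix.diagonal_mul_diagonal]
      have hfun : (fun i => Real.sqrt (d i) * (d i)⁻¹) = fun i => (Real.sqrt (d i))⁻¹ := by
        funext l
        have h3 : (d l)⁻¹ = (Real.sqrt (d l))⁻¹ * (Real.sqrt (d l))⁻¹ := by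
          rw [← mul_inv, Real.mul_self_sqrt (hd_pos l).le]
        rw [h3, ← mul_assoc, mul_inv_cancel₀ (hsqrt_pos l).ne', one_mul]
      rw [hfun]
    rw [hP, ← Matrix.mul_assoc, h2]
  have hpow : ∀ k : ℕ, (F * Atil * F) ^ k = E * P ^ k * F := by
    intro k
    rw [hconj]
    exact myconj_pow E P F hEF hFE k
  have hentry : ∀ k : ℕ, ((F * Atil * F) ^ k) i j
      = Real.sqrt (d i) * y k i * (Real.sqrt (d j))⁻¹ := by
    intro k
    rw [hpow k, hE, hF, Matrix.mul_diagonal, Matrix.diagonal_mul]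
  have hlim : Real.sqrt (d i) * (d j / S) * (Real.sqrt (d j))⁻¹
      = Real.sqrt (d i * d j) / S := by
    have h4 : d j * (Real.sqrt (d j))⁻¹ = Real.sqrt (d j) := by
      nth_rewrite 1 [← Real.mul_self_sqrt (hd_pos j).le]
      rw [mul_inv_cancel_right₀ (hsqrt_pos j).ne']
    rw [Real.sqrt_mul (hd_pos i).le]
    calc Real.sqrt (d i) * (d j / S) * (Real.sqrt (d j))⁻¹
        = Real.sqrt (d i) * (d j * (Real.sqrt (d j))⁻¹) / S := by ring
      _ = Real.sqrt (d i) * Real.sqrt (d j) / S := by rw [h4]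
  have final : Tendsto (fun k : ℕ => ((F * Atil * F) ^ k) i j) atTop
      (nhds (Real.sqrt (d i * d j) / S)) := by
    simp only [hentry]
    rw [← hlim]
    exact (hytendsto.const_mul _).mul_const _
  exact final
end

section
/- Let G be a finite connected graph, Ã = A + I, D̃ its degree matrix, Â₊ = D̃⁻¹Ã, and X ∈ ℝ^{n×d}. Then as k → ∞, every row of Â₊^k X converges to the same vector (Σ_i D̃_{ii} x_i)/(Σ_i D̃_{ii}), the degree-weighted average of the rows x_i of X; i.e., all node representations become identical in the limit. -/
open Matrix Filter Finset

private lemma stmt15_pow_nonneg {n : ℕ} (P : Matrix (Fin n) (Fin n) ℝ)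
    (h0 : ∀ i j, 0 ≤ P i j) (k : ℕ) : ∀ i j, 0 ≤ (P ^ k) i j := by
  induction k with
  | zero => intro i j; simp [Matrix.one_apply]; split <;> norm_num
  | succ k ih =>
    intro i j
    rw [pow_succ, Matrix.mul_apply]
    exact Finset.sum_nonneg fun l _ => mul_nonneg (ih i l) (h0 l j)

private lemma stmt15_pow_rowsum {n : ℕ} (P : Matrix (Fin n) (Fin n) ℝ)
    (h1 : ∀ i, ∑ j, P i j = 1) (k : ℕ) : ∀ i, ∑ j, (P ^ k) i j = 1 := by
  induction k with
  | zero => intro i; simp [Matrix.one_apply]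
  | succ k ih =>
    intro i
    simp only [pow_succ, Matrix.mul_apply]
    rw [Finset.sum_comm]
    calc ∑ l, ∑ j, (P ^ k) i l * P l j = ∑ l, (P ^ k) i l * ∑ j, P l j := by
          simp [Finset.mul_sum]
      _ = 1 := by simp [h1, ih i]

private lemma stmt15_bounds {n : ℕ} (hun : (Finset.univ : Finset (Fin n)).Nonempty)
    (q : Fin n → ℝ) (y : Fin n → ℝ) (ε : ℝ) (hε : 0 ≤ ε)
    (h0 : ∀ l, ε ≤ q l) (h1 : ∑ l, q l = 1) :
    (Finset.univ.inf' hun y) + ε * (Finset.univ.sup' hun y - Finset.univ.inf' hun y)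
      ≤ ∑ l, q l * y l
    ∧ ∑ l, q l * y l ≤ Finset.univ.sup' hun y - ε * (Finset.univ.sup' hun y - Finset.univ.inf' hun y) := by
  set M := Finset.univ.sup' hun y with hM
  set mm := Finset.univ.inf' hun y with hmm
  have hMm : mm ≤ M := by
    obtain ⟨a, -⟩ := id hun
    exact le_trans (Finset.inf'_le _ (Finset.mem_univ a)) (Finset.le_sup' _ (Finset.mem_univ a))
  have hq0 : ∀ l, (0:ℝ) ≤ q l := fun l => le_trans hε (h0 l)
  have hyM : ∀ l, y l ≤ M := fun l => Finset.le_sup' _ (Finset.mem_univ l)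
  have hym : ∀ l, mm ≤ y l := fun l => Finset.inf'_le _ (Finset.mem_univ l)
  constructor
  · obtain ⟨l₁, _, hl₁⟩ := Finset.exists_mem_eq_sup' hun y
    have hsplit : q l₁ * y l₁ + ∑ l ∈ Finset.univ.erase l₁, q l * y l = ∑ l, q l * y l :=
      Finset.add_sum_erase _ (fun l => q l * y l) (Finset.mem_univ l₁)
    have hqsplit : q l₁ + ∑ l ∈ Finset.univ.erase l₁, q l = 1 := by
      rw [Finset.add_sum_erase _ q (Finset.mem_univ l₁)]; exact h1
    have hbound : ∑ l ∈ Finset.univ.erase l₁, q l * mm ≤ ∑ l ∈ Finset.univ.erase l₁, q l * y l :=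
      Finset.sum_le_sum fun l _ => mul_le_mul_of_nonneg_left (hym l) (hq0 l)
    rw [← Finset.sum_mul] at hbound
    have hql₁ : ε ≤ q l₁ := h0 l₁
    have hl₁' : M = y l₁ := hl₁
    have hs : ∑ l ∈ Finset.univ.erase l₁, q l = 1 - q l₁ := by linarith
    rw [hs] at hbound
    have e2 : q l₁ * y l₁ = q l₁ * M := by rw [hl₁']
    have h3 : ε * (M - mm) ≤ q l₁ * (M - mm) :=
      mul_le_mul_of_nonneg_right hql₁ (sub_nonneg.mpr hMm)
    nlinarith [hsplit, hbound, e2, h3]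
  · obtain ⟨l₀, _, hl₀⟩ := Finset.exists_mem_eq_inf' hun y
    have hsplit : q l₀ * y l₀ + ∑ l ∈ Finset.univ.erase l₀, q l * y l = ∑ l, q l * y l :=
      Finset.add_sum_erase _ (fun l => q l * y l) (Finset.mem_univ l₀)
    have hqsplit : q l₀ + ∑ l ∈ Finset.univ.erase l₀, q l = 1 := by
      rw [Finset.add_sum_erase _ q (Finset.mem_univ l₀)]; exact h1
    have hbound : ∑ l ∈ Finset.univ.erase l₀, q l * y l ≤ ∑ l ∈ Finset.univ.erase l₀, q l * M :=
      Finset.sum_le_sum fun l _ => mul_le_mul_of_nonneg_left (hyM l) (hq0 l)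
    rw [← Finset.sum_mul] at hbound
    have hql₀ : ε ≤ q l₀ := h0 l₀
    have hl₀' : mm = y l₀ := hl₀
    have hs : ∑ l ∈ Finset.univ.erase l₀, q l = 1 - q l₀ := by linarith
    rw [hs] at hbound
    have e2 : q l₀ * y l₀ = q l₀ * mm := by rw [hl₀']
    have h3 : ε * (M - mm) ≤ q l₀ * (M - mm) :=
      mul_le_mul_of_nonneg_right hql₀ (sub_nonneg.mpr hMm)
    nlinarith [hsplit, hbound, e2, h3]

private lemma stmt15_pow_pos_of_walk {n : ℕ} (G : SimpleGraph (Fin n)) [DecidableRel G.Adj]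
    (P : Matrix (Fin n) (Fin n) ℝ) (h0 : ∀ i j, 0 ≤ P i j)
    (hdiag : ∀ i, 0 < P i i) (hadj : ∀ i j, G.Adj i j → 0 < P i j) :
    ∀ (k : ℕ) (i j : Fin n) (w : G.Walk i j), w.length ≤ k → 0 < (P ^ k) i j := by
  intro k
  induction k with
  | zero =>
    intro i j w hw
    have hij := w.eq_of_length_eq_zero (Nat.le_zero.mp hw)
    subst hij
    simp [Matrix.one_apply]
  | succ k ih =>
    intro i j w hw
    cases w with
    | nil =>
      rw [pow_succ', Matrix.mul_apply]
      refine Finset.sum_pos' (fun l _ => mul_nonneg (h0 i l) (stmt15_pow_nonneg P h0 k l i)) ?_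
      exact ⟨i, Finset.mem_univ i, mul_pos (hdiag i) (ih i i SimpleGraph.Walk.nil (by simp))⟩
    | @cons _ l _ hal w' =>
      rw [pow_succ', Matrix.mul_apply]
      refine Finset.sum_pos' (fun l' _ => mul_nonneg (h0 i l') (stmt15_pow_nonneg P h0 k l' j)) ?_
      refine ⟨l, Finset.mem_univ l, mul_pos (hadj i l hal) (ih l j w' ?_)⟩
      simpa [SimpleGraph.Walk.length_cons] using hw

/-- For a connected graph, every row of (D̃⁻¹Ã)^k X converges to the same
degree-weighted average of the rows of X. -/
theorem stmt15 {n m : ℕ} (G : SimpleGraph (Fin n)) [DecidableRel G.Adj]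
    (hconn : G.Connected)
    (Atil : Matrix (Fin n) (Fin n) ℝ) (hAtil : Atil = G.adjMatrix ℝ + 1)
    (d : Fin n → ℝ) (hd : ∀ i, d i = ∑ j, Atil i j)
    (X : Matrix (Fin n) (Fin m) ℝ) :
    ∀ i j, Filter.Tendsto
      (fun k : ℕ => (((Matrix.diagonal (fun i => (d i)⁻¹) * Atil) ^ k) * X) i j)
      Filter.atTop (nhds ((∑ l, d l * X l j) / ∑ l, d l)) := by
  intro i j
  have hne : Nonempty (Fin n) := hconn.nonempty
  have hn0 : 0 < n := Fin.pos_iff_nonempty.mpr hne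
  have hun : (Finset.univ : Finset (Fin n)).Nonempty := Finset.univ_nonempty
  -- basic facts on Atil and d
  have hA0 : ∀ a b, 0 ≤ Atil a b := by
    intro a b
    rw [hAtil]
    simp only [Matrix.add_apply, SimpleGraph.adjMatrix_apply, Matrix.one_apply]
    split <;> split <;> norm_num
  have hAdiag : ∀ a, Atil a a = 1 := by
    intro a; rw [hAtil]; simp [Matrix.one_apply]
  have hAadj : ∀ a b, G.Adj a b → 0 < Atil a b := by
    intro a b hab
    rw [hAtil]
    simp only [Matrix.add_apply, SimpleGraph.adjMatrix_apply, Matrix.one_apply, if_pos hab]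
    split <;> norm_num
  have hAsymm : ∀ a b, Atil a b = Atil b a := by
    intro a b
    rw [hAtil]
    simp only [Matrix.add_apply, SimpleGraph.adjMatrix_apply, Matrix.one_apply]
    rw [if_congr (G.adj_comm a b) rfl rfl, if_congr (eq_comm (a := a) (b := b)) rfl rfl]
  have hd0 : ∀ a, 0 < d a := by
    intro a
    rw [hd]
    have : (1:ℝ) ≤ ∑ b, Atil a b := by
      calc (1:ℝ) = Atil a a := (hAdiag a).symm
        _ ≤ ∑ b, Atil a b := Finset.single_le_sum (fun b _ => hA0 a b) (Finset.mem_univ a)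
    linarith
  set P := Matrix.diagonal (fun i => (d i)⁻¹) * Atil with hPdef
  have hPapp : ∀ a b, P a b = (d a)⁻¹ * Atil a b := by
    intro a b; rw [hPdef, Matrix.diagonal_mul]
  have hP0 : ∀ a b, 0 ≤ P a b := fun a b => by
    rw [hPapp]; exact mul_nonneg (inv_nonneg.mpr (hd0 a).le) (hA0 a b)
  have hProw : ∀ a, ∑ b, P a b = 1 := by
    intro a
    simp only [hPapp]
    rw [← Finset.mul_sum, ← hd a, inv_mul_cancel₀ (hd0 a).ne']
  have hPdiag : ∀ a, 0 < P a a := fun a => by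
    rw [hPapp, hAdiag]; simpa using inv_pos.mpr (hd0 a)
  have hPadj : ∀ a b, G.Adj a b → 0 < P a b := fun a b hab => by
    rw [hPapp]; exact mul_pos (inv_pos.mpr (hd0 a)) (hAadj a b hab)
  have hPos : ∀ a b, 0 < (P ^ n) a b := by
    intro a b
    obtain ⟨w⟩ := hconn.preconnected a b
    refine stmt15_pow_pos_of_walk G P hP0 hPdiag hPadj n a b w.toPath ?_
    have := SimpleGraph.Walk.IsPath.length_lt (p := (w.toPath : G.Walk a b)) w.toPath.2
    simpa using this.le
  -- epsilon
  have hunp : (Finset.univ : Finset (Fin n × Fin n)).Nonempty := Finset.univ_nonempty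
  set ε := Finset.univ.inf' hunp (fun p : Fin n × Fin n => (P ^ n) p.1 p.2) with hεdef
  have hε0 : 0 < ε := by
    obtain ⟨p, _, hp⟩ := Finset.exists_mem_eq_inf' hunp (fun p : Fin n × Fin n => (P ^ n) p.1 p.2)
    rw [hεdef, hp]; exact hPos p.1 p.2
  have hεle : ∀ a b, ε ≤ (P ^ n) a b := fun a b =>
    Finset.inf'_le _ (Finset.mem_univ (a, b))
  -- the vector sequence
  set y : Fin n → ℝ := fun l => X l j with hy
  set v : ℕ → Fin n → ℝ := fun k a => ∑ b, (P ^ k) a b * y b with hv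
  have hveq : ∀ k a, ((P ^ k) * X) a j = v k a := by
    intro k a; rw [Matrix.mul_apply]
  set M : ℕ → ℝ := fun k => Finset.univ.sup' hun (v k) with hM
  set mm : ℕ → ℝ := fun k => Finset.univ.inf' hun (v k) with hmm
  have hMm : ∀ k, mm k ≤ M k := by
    intro k
    obtain ⟨a, _⟩ := hun
    exact le_trans (Finset.inf'_le _ (Finset.mem_univ a)) (Finset.le_sup' _ (Finset.mem_univ a))
  have hrec : ∀ s k a, v (s + k) a = ∑ l, (P ^ s) a l * v k l := by
    intro s k a
    simp only [hv, pow_add, Matrix.mul_apply, Finset.sum_mul, Finset.mul_sum]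
    rw [Finset.sum_comm]
    refine Finset.sum_congr rfl fun l _ => Finset.sum_congr rfl fun b _ => by ring
  -- monotone bounds
  have hstep : ∀ k, mm k ≤ mm (k + 1) ∧ M (k + 1) ≤ M k := by
    intro k
    have hb : ∀ a, mm k ≤ v (k + 1) a ∧ v (k + 1) a ≤ M k := by
      intro a
      have h := stmt15_bounds hun (fun l => P a l) (v k) 0 le_rfl (fun l => hP0 a l) (hProw a)
      have he : v (k + 1) a = ∑ l, P a l * v k l := by
        have := hrec 1 k a; simpa [pow_one, Nat.add_comm] using this
      rw [he]
      have h1 : mm k + 0 * (M k - mm k) ≤ ∑ l, P a l * v k l := h.1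
      have h2 : ∑ l, P a l * v k l ≤ M k - 0 * (M k - mm k) := h.2
      constructor <;> linarith
    constructor
    · exact Finset.le_inf' hun _ fun a _ => (hb a).1
    · exact Finset.sup'_le hun _ fun a _ => (hb a).2
  have hmmono : Monotone mm := monotone_nat_of_le_succ fun k => (hstep k).1
  have hManti : Antitone M := antitone_nat_of_succ_le fun k => (hstep k).2
  -- contraction after n steps
  have hcontr : ∀ k, M (n + k) - mm (n + k) ≤ (1 - 2 * ε) * (M k - mm k) := by
    intro k
    have hb : ∀ a, mm k + ε * (M k - mm k) ≤ v (n + k) a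
        ∧ v (n + k) a ≤ M k - ε * (M k - mm k) := by
      intro a
      have h := stmt15_bounds hun (fun l => (P ^ n) a l) (v k) ε hε0.le
        (fun l => hεle a l) (stmt15_pow_rowsum P hProw n a)
      rw [hrec n k a]
      exact h
    have h1 : M (n + k) ≤ M k - ε * (M k - mm k) :=
      Finset.sup'_le hun _ fun a _ => (hb a).2
    have h2 : mm k + ε * (M k - mm k) ≤ mm (n + k) :=
      Finset.le_inf' hun _ fun a _ => (hb a).1
    nlinarith [hMm k]
  set c := max (1 - 2 * ε) 0 with hc
  have hc0 : 0 ≤ c := le_max_right _ _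
  have hc1 : c < 1 := max_lt (by linarith) one_pos
  have hcontr' : ∀ k, M (n + k) - mm (n + k) ≤ c * (M k - mm k) := by
    intro k
    calc M (n + k) - mm (n + k) ≤ (1 - 2 * ε) * (M k - mm k) := hcontr k
      _ ≤ c * (M k - mm k) := mul_le_mul_of_nonneg_right (le_max_left _ _) (by linarith [hMm k])
  have hgeo : ∀ t, M (n * t) - mm (n * t) ≤ c ^ t * (M 0 - mm 0) := by
    intro t
    induction t with
    | zero => simp
    | succ t ih =>
      have : n * (t + 1) = n + n * t := by ring
      rw [this]
      calc M (n + n * t) - mm (n + n * t) ≤ c * (M (n * t) - mm (n * t)) := hcontr' _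
        _ ≤ c * (c ^ t * (M 0 - mm 0)) := mul_le_mul_of_nonneg_left ih hc0
        _ = c ^ (t + 1) * (M 0 - mm 0) := by ring
  have hosc : ∀ k, M k - mm k ≤ c ^ (k / n) * (M 0 - mm 0) := by
    intro k
    have h1 : M k ≤ M (n * (k / n)) := hManti (Nat.mul_div_le k n)
    have h2 : mm (n * (k / n)) ≤ mm k := hmmono (Nat.mul_div_le k n)
    have := hgeo (k / n)
    linarith
  -- invariant and target
  set S := ∑ l, d l with hS
  have hS0 : 0 < S := Finset.sum_pos (fun l _ => hd0 l) hun
  have hstat : ∀ b, ∑ l, d l * P l b = d b := by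
    intro b
    have : ∀ l, d l * P l b = Atil l b := by
      intro l
      rw [hPapp, ← mul_assoc, mul_inv_cancel₀ (hd0 l).ne', one_mul]
    simp only [this]
    rw [hd b]
    exact Finset.sum_congr rfl fun l _ => hAsymm l b
  have hinv : ∀ k, ∑ l, d l * v k l = ∑ l, d l * y l := by
    intro k
    induction k with
    | zero => simp [hv, Matrix.one_apply]
    | succ k ih =>
      have he : ∀ a, v (k + 1) a = ∑ l, P a l * v k l := by
        intro a; have := hrec 1 k a; simpa [pow_one, Nat.add_comm] using this
      calc ∑ l, d l * v (k + 1) l = ∑ l, ∑ b, d l * (P l b * v k b) := by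
            simp only [he, Finset.mul_sum]
        _ = ∑ b, (∑ l, d l * P l b) * v k b := by
            rw [Finset.sum_comm]
            refine Finset.sum_congr rfl fun b _ => ?_
            rw [Finset.sum_mul]
            exact Finset.sum_congr rfl fun l _ => by ring
        _ = ∑ b, d b * v k b := by simp only [hstat]
        _ = ∑ l, d l * y l := ih
  set L := (∑ l, d l * y l) / S with hL
  have hLb : ∀ k, mm k ≤ L ∧ L ≤ M k := by
    intro k
    have h1 : ∑ l, d l * v k l ≤ ∑ l, d l * M k :=
      Finset.sum_le_sum fun l _ => mul_le_mul_of_nonneg_left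
        (Finset.le_sup' _ (Finset.mem_univ l)) (hd0 l).le
    have h2 : ∑ l, d l * mm k ≤ ∑ l, d l * v k l :=
      Finset.sum_le_sum fun l _ => mul_le_mul_of_nonneg_left
        (Finset.inf'_le _ (Finset.mem_univ l)) (hd0 l).le
    rw [← Finset.sum_mul] at h1 h2
    rw [hinv k] at h1 h2
    constructor
    · rw [hL, le_div_iff₀ hS0]; linarith
    · rw [hL, div_le_iff₀ hS0]; linarith
  have habs : ∀ k, |v k i - L| ≤ M k - mm k := by
    intro k
    have h1 : v k i ≤ M k := Finset.le_sup' _ (Finset.mem_univ i)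
    have h2 : mm k ≤ v k i := Finset.inf'_le _ (Finset.mem_univ i)
    have h3 := hLb k
    rw [abs_le]
    constructor <;> linarith [h3.1, h3.2]
  -- convergence
  have hdiv : Tendsto (fun k : ℕ => k / n) atTop atTop := by
    refine tendsto_atTop_atTop.mpr fun b => ⟨n * b, fun k hk => ?_⟩
    rw [Nat.le_div_iff_mul_le hn0]
    calc b * n = n * b := by ring
      _ ≤ k := hk
  have hc_tend : Tendsto (fun k : ℕ => c ^ (k / n) * (M 0 - mm 0)) atTop (nhds 0) := by
    have h := (tendsto_pow_atTop_nhds_zero_of_lt_one hc0 hc1).comp hdiv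
    have := h.mul_const (M 0 - mm 0)
    simpa using this
  have habs_tend : Tendsto (fun k => |v k i - L|) atTop (nhds 0) := by
    refine squeeze_zero (fun k => abs_nonneg _) (fun k => ?_) hc_tend
    exact le_trans (habs k) (hosc k)
  have hvt : Tendsto (fun k => v k i) atTop (nhds L) := by
    rw [tendsto_iff_dist_tendsto_zero]
    simpa [Real.dist_eq] using habs_tend
  refine hvt.congr fun k => ?_
  exact (hveq k i).symm
end
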